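/- arXiv:1201.4703 — 2 statements merged into one kernel-verified Lean document; each statement's English description precedes it below -/
import Mathlib

section
/- The generalized q-Lucas polynomials L_n = L_n(x,−1,s,q) satisfy L_n = (1+q^n)·F_{n+1} − q^n·x·F_n for all n ≥ 1, where F_n = F_n(x,−1,s,q) are the generalized q-Fibonacci polynomials. -/
noncomputable section

/-- The field `ℚ(q,s,x)` of rational functions. -/
abbrev K : Type := FractionRing (MvPolynomial (Fin 3) ℚ)

def q : K := algebraMap (MvPolynomial (Fin 3) ℚ) K (MvPolynomial.X 0)
def s : K := algebraMap (MvPolynomial (Fin 3) ℚ) K (MvPolynomial.X 1)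
def x : K := algebraMap (MvPolynomial (Fin 3) ℚ) K (MvPolynomial.X 2)

/-- The generalized q-Fibonacci polynomials `F n = F n (x,-1,s,q)`:
`F 0 = 0`, `F 1 = 1`, `F n = x F (n-1) + (q^(n-2) s / ((1+q^(n-2))(1+q^(n-1)))) F (n-2)`. -/
def genFib : ℕ → K
  | 0 => 0
  | 1 => 1
  | (n + 2) =>
      x * genFib (n + 1) + (q ^ n * s / ((1 + q ^ n) * (1 + q ^ (n + 1)))) * genFib n

/-- The generalized q-Lucas polynomials `L n = L n (x,-1,s,q)`:
`L 0 = 2`, `L 1 = x`, `L n = x L (n-1) + (q^(n-1) s / ((1+q^(n-2))(1+q^(n-1)))) L (n-2)`. -/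
def genLucas : ℕ → K
  | 0 => 2
  | 1 => x
  | (n + 2) =>
      x * genLucas (n + 1) + (q ^ (n + 1) * s / ((1 + q ^ n) * (1 + q ^ (n + 1)))) * genLucas n


lemma one_add_q_pow_ne_zero (n : ℕ) : (1 : K) + q ^ n ≠ 0 := by
  have h : (1 : MvPolynomial (Fin 3) ℚ) + (MvPolynomial.X 0) ^ n ≠ 0 := by
    intro h
    have h2 := congrArg (MvPolynomial.eval (fun _ => (0 : ℚ))) h
    rcases n with _ | n <;> simp at h2
  have : (1 : K) + q ^ n =
      algebraMap (MvPolynomial (Fin 3) ℚ) K ((1 : MvPolynomial (Fin 3) ℚ) + (MvPolynomial.X 0) ^ n) := by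
    simp [q, map_add, map_pow]
  rw [this]
  exact fun hc => h (IsFractionRing.injective (MvPolynomial (Fin 3) ℚ) K (by simpa using hc))

theorem genLucas_eq_aux : ∀ n : ℕ,
    genLucas n = (1 + q ^ n) * genFib (n + 1) - q ^ n * x * genFib n
  | 0 => by simp [genLucas, genFib]; ring
  | 1 => by
      have h0 := one_add_q_pow_ne_zero 0
      have h1 := one_add_q_pow_ne_zero 1
      show x = (1 + q ^ 1) * genFib 2 - q ^ 1 * x * genFib 1
      show x = (1 + q ^ 1) * (x * genFib 1 + (q ^ 0 * s / ((1 + q ^ 0) * (1 + q ^ 1))) * genFib 0)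
        - q ^ 1 * x * genFib 1
      simp [genFib]
      ring
  | (n + 2) => by
      have ih1 := genLucas_eq_aux (n + 1)
      have ih2 := genLucas_eq_aux n
      have h0 := one_add_q_pow_ne_zero n
      have h1 := one_add_q_pow_ne_zero (n + 1)
      have h2 := one_add_q_pow_ne_zero (n + 2)
      have hL : genLucas (n + 2) =
          x * genLucas (n + 1) + (q ^ (n + 1) * s / ((1 + q ^ n) * (1 + q ^ (n + 1)))) * genLucas n := rfl
      have hF3 : genFib (n + 3) =
          x * genFib (n + 2) + (q ^ (n + 1) * s / ((1 + q ^ (n + 1)) * (1 + q ^ (n + 2)))) * genFib (n + 1) := rfl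
      have hF2 : genFib (n + 2) =
          x * genFib (n + 1) + (q ^ n * s / ((1 + q ^ n) * (1 + q ^ (n + 1)))) * genFib n := rfl
      rw [hL, ih1, ih2, hF3, hF2]
      field_simp
      ring

theorem genLucas_eq_genFib (n : ℕ) (hn : 1 ≤ n) :
    genLucas n = (1 + q ^ n) * genFib (n + 1) - q ^ n * x * genFib n := by
  exact genLucas_eq_aux n

end
end

section
/- The q-derivative of the q-Chebyshev polynomial of the first kind satisfies D_q T_n(x,s,q) = [n]_q · U_{n-1}(x,s,q) for all n ≥ 1, where D_q f(x) = (f(x) − f(qx))/(x − qx) and [n]_q = 1 + q + ⋯ + q^{n-1}. -/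
open Finset

noncomputable section

/-- q-Chebyshev polynomials of the first kind as functions of the variable `x`:
`T 0 = 1`, `T 1 = x`, `T n = (1+q^(n-1)) x T (n-1) + q^(n-1) s T (n-2)`. -/
def chebT : ℕ → K → K
  | 0, _ => 1
  | 1, x => x
  | (n + 2), x => (1 + q ^ (n + 1)) * x * chebT (n + 1) x + q ^ (n + 1) * s * chebT n x

/-- q-Chebyshev polynomials of the second kind as functions of the variable `x`:
`U 0 = 1`, `U 1 = (1+q)x`, `U n = (1+q^n) x U (n-1) + q^(n-1) s U (n-2)`. -/
def chebU : ℕ → K → K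
  | 0, _ => 1
  | 1, x => (1 + q) * x
  | (n + 2), x => (1 + q ^ (n + 2)) * x * chebU (n + 1) x + q ^ (n + 1) * s * chebU n x

theorem chebT_add_two (n : ℕ) (y : K) :
    chebT (n + 2) y = (1 + q ^ (n + 1)) * y * chebT (n + 1) y + q ^ (n + 1) * s * chebT n y :=
  rfl

theorem chebU_add_two (n : ℕ) (y : K) :
    chebU (n + 2) y = (1 + q ^ (n + 2)) * y * chebU (n + 1) y + q ^ (n + 1) * s * chebU n y :=
  rfl

theorem chebT_add_two_eq_chebU (n : ℕ) (y : K) :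
    chebT (n + 2) y = y * chebU (n + 1) y + q ^ (n + 1) * s * chebU n y := by
  induction n using Nat.twoStepInduction with
  | zero => simp only [chebT, chebU]; ring
  | one => simp only [chebT, chebU]; ring
  | more n ih₁ ih₂ =>
    rw [chebT_add_two (n + 2), ih₁, ih₂, chebU_add_two (n + 1), chebU_add_two n]
    ring

theorem chebT_sub_chebT_q_mul (n : ℕ) (y : K) :
    chebT (n + 1) y - chebT (n + 1) (q * y) =
      (y - q * y) * ((∑ i ∈ range (n + 1), q ^ i) * chebU n y) := by
  induction n using Nat.twoStepInduction with
  | zero => simp [chebT, chebU]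
  | one => simp only [chebT, chebU, sum_range_succ]; ring
  | more n ih₁ ih₂ =>
    set G := ∑ i ∈ range (n + 1), q ^ i
    have hG₂ : ∑ i ∈ range (n + 2), q ^ i = q ^ (n + 1) + G := geom_sum_succ'
    have hG₃ : ∑ i ∈ range (n + 3), q ^ i = 1 + q * (q ^ (n + 1) + G) := by
      rw [geom_sum_succ, hG₂]; ring
    rw [hG₂] at ih₂
    rw [hG₃, chebT_add_two (n + 1), chebT_add_two (n + 1) (q * y), chebU_add_two n]
    -- `y T(y) - qy T(qy) = (y - qy) T(y) + qy (T(y) - T(qy))`, and `T(y)` is expanded in `U`.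
    linear_combination (1 + q ^ (n + 2)) * q * y * ih₂ + q ^ (n + 2) * s * ih₁ +
      (1 + q ^ (n + 2)) * (y - q * y) * chebT_add_two_eq_chebU n y

theorem q_ne_one : q ≠ 1 := by
  intro h
  have h₀ := congrArg (MvPolynomial.eval 0)
    (IsFractionRing.injective (MvPolynomial (Fin 3) ℚ) K (h.trans (map_one _).symm))
  simp at h₀

theorem x_ne_zero : x ≠ 0 :=
  (map_ne_zero_iff _ (IsFractionRing.injective (MvPolynomial (Fin 3) ℚ) K)).mpr
    (MvPolynomial.X_ne_zero 2)

theorem x_sub_q_mul_x_ne_zero : x - q * x ≠ 0 := by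
  rw [← one_sub_mul, mul_comm]
  exact mul_ne_zero x_ne_zero (sub_ne_zero.mpr q_ne_one.symm)

theorem qDeriv_chebT_general (n : ℕ) :
    (chebT n x - chebT n (q * x)) / (x - q * x) =
      (∑ i ∈ range n, q ^ i) * chebU (n - 1) x := by
  cases n with
  | zero => simp [chebT]
  | succ m =>
    rw [chebT_sub_chebT_q_mul, Nat.add_sub_cancel, mul_div_cancel_left₀ _ x_sub_q_mul_x_ne_zero]

/-- `D_q T_n = [n]_q U_{n-1}`, where `D_q f(x) = (f(x) - f(qx))/(x - qx)` is the
q-differentiation operator and `[n]_q = 1 + q + ⋯ + q^(n-1)`, evaluated at the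
generic point `x`. -/
theorem qDeriv_chebT (n : ℕ) (hn : 1 ≤ n) :
    (chebT n x - chebT n (q * x)) / (x - q * x) =
      (∑ i ∈ range n, q ^ i) * chebU (n - 1) x :=
  qDeriv_chebT_general n

end
end
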